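/- arXiv:2302.10508 — 2 statements merged into one kernel-verified Lean document; each statement's English description precedes it below -/
import Mathlib

section
/- Let G be a group acting on a nonempty compact Hausdorff topological space X such that for every g ∈ G the translation map x ↦ g • x is continuous. For a function f : X → X, let O(f) denote the closure, in the space of all functions X → X equipped with the product (pointwise convergence) topology, of the set {(x ↦ h • x) ∘ f : h ∈ G}. Then for all functions f, g : X → X one has O(f ∘ g) = {e ∘ g : e ∈ O(f)}. -/
open Set

/-- `orbitClosure G f` is the closure, in the space `X → X` with the product
(pointwise convergence) topology, of the set of left `G`-translates of `f`. -/
def orbitClosure (G : Type*) {X : Type*} [Group G] [MulAction G X]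
    [TopologicalSpace X] (f : X → X) : Set (X → X) :=
  closure {e : X → X | ∃ h : G, e = (fun x => h • x) ∘ f}

/-! Precomposition with `g` is a continuous map of the compact Hausdorff space `X → X` into
itself, hence closed, so it commutes with taking closures; and it carries the translates of `f`
onto the translates of `f ∘ g`. -/

lemma setOf_translate_comp_eq_image (G : Type*) {X Y Z : Type*} [SMul G X]
    (f : Y → X) (g : Z → Y) :
    {e : Z → X | ∃ h : G, e = (fun x => h • x) ∘ (f ∘ g)} =
      (· ∘ g) '' {e : Y → X | ∃ h : G, e = (fun x => h • x) ∘ f} := by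
  ext e
  constructor
  · rintro ⟨h, rfl⟩
    exact ⟨_, ⟨h, rfl⟩, rfl⟩
  · rintro ⟨_, ⟨h, rfl⟩, rfl⟩
    exact ⟨h, rfl⟩

theorem orbitClosure_comp_general
    {G X : Type*} [Group G] [MulAction G X]
    [TopologicalSpace X] [CompactSpace X] [T2Space X]
    (f g : X → X) :
    orbitClosure G (f ∘ g) = {e ∘ g | e ∈ orbitClosure G f} := by
  have hprecomp : Continuous (· ∘ g : (X → X) → (X → X)) := Pi.continuous_precomp g
  rw [orbitClosure, orbitClosure, setOf_translate_comp_eq_image,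
    hprecomp.isClosedMap.closure_image_eq_of_continuous hprecomp]
  rfl

/-- `O(f ∘ g) = O(f) ∘ g`. -/
theorem orbitClosure_comp
    {G X : Type*} [Group G] [MulAction G X]
    [TopologicalSpace X] [CompactSpace X] [T2Space X] [Nonempty X]
    (hcont : ∀ g : G, Continuous fun x : X => g • x)
    (f g : X → X) :
    orbitClosure G (f ∘ g) = {e ∘ g | e ∈ orbitClosure G f} :=
  orbitClosure_comp_general f g
end

section
/- Let G be a group acting on a nonempty compact Hausdorff topological space X such that for every g ∈ G the translation map x ↦ g • x is continuous, and let E(X) be the enveloping semigroup of the flow. The set of almost periodic elements of E(X) is a left ideal: if f ∈ E(X) is almost periodic and e ∈ E(X), then e ∘ f belongs to E(X) and e ∘ f is almost periodic. -/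
/-- The enveloping semigroup of the `G`-flow `X`: the closure in `X → X` (product
topology) of the set of translation maps. -/
def envSemigroup (G X : Type*) [Group G] [MulAction G X] [TopologicalSpace X] :
    Set (X → X) :=
  closure {e : X → X | ∃ g : G, e = fun x => g • x}

/-- Closure of the `G`-orbit of `f : X → X` under left translation. -/
def funOrbitClosure (G : Type*) {X : Type*} [Group G] [MulAction G X]
    [TopologicalSpace X] (f : X → X) : Set (X → X) :=
  closure {e : X → X | ∃ h : G, e = (fun x => h • x) ∘ f}

/-- A subflow of the function space `X → X` under the `G`-action
`h • e = (fun x => h • x) ∘ e`. -/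
def IsFunSubflow (G : Type*) {X : Type*} [Group G] [MulAction G X]
    [TopologicalSpace X] (M : Set (X → X)) : Prop :=
  M.Nonempty ∧ IsClosed M ∧ ∀ h : G, ∀ e ∈ M, ((fun x => h • x) ∘ e) ∈ M

/-- `f` is almost periodic if the closure of its `G`-orbit is a minimal subflow. -/
def IsAlmostPeriodicFun (G : Type*) {X : Type*} [Group G] [MulAction G X]
    [TopologicalSpace X] (f : X → X) : Prop :=
  IsFunSubflow G (funOrbitClosure G f) ∧
    ∀ M ⊆ funOrbitClosure G f, IsFunSubflow G M → M = funOrbitClosure G f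

/-! In a minimal subflow every point has dense orbit, so every point of it is almost periodic.
Right composition with `f` is continuous and maps translations to translates of `f`, hence
carries `E(X)` into the orbit closure of `f`; for almost periodic `f` this orbit closure is a
minimal subflow containing `e ∘ f`. -/

section FunctionFlow

variable {G X : Type*} [Group G] [MulAction G X]

theorem translate_comp_translate (h k : G) (u : X → X) :
    (fun x => h • x) ∘ ((fun x => k • x) ∘ u) = (fun x => (h * k) • x) ∘ u := by
  funext x
  simp [mul_smul]

variable [TopologicalSpace X]

theorem continuous_translate_comp (hcont : ∀ g : G, Continuous fun x : X => g • x) (h : G) :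
    Continuous fun u : X → X => (fun x => h • x) ∘ u :=
  continuous_pi fun x => (hcont h).comp (continuous_apply x)

theorem funOrbitClosure_subset {M : Set (X → X)} (hM : IsClosed M)
    (hinv : ∀ h : G, ∀ u ∈ M, (fun x => h • x) ∘ u ∈ M) {f : X → X} (hf : f ∈ M) :
    funOrbitClosure G f ⊆ M :=
  closure_minimal (fun _ ⟨h, hu⟩ => hu ▸ hinv h f hf) hM

theorem mem_funOrbitClosure_self (f : X → X) : f ∈ funOrbitClosure G f :=
  subset_closure ⟨1, by funext x; simp⟩

theorem translate_comp_mem_funOrbitClosure (hcont : ∀ g : G, Continuous fun x : X => g • x)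
    {f u : X → X} (h : G) (hu : u ∈ funOrbitClosure G f) :
    (fun x => h • x) ∘ u ∈ funOrbitClosure G f :=
  map_mem_closure (continuous_translate_comp hcont h) hu
    fun _ ⟨k, hk⟩ => ⟨h * k, hk ▸ translate_comp_translate h k f⟩

theorem isFunSubflow_funOrbitClosure (hcont : ∀ g : G, Continuous fun x : X => g • x)
    (f : X → X) : IsFunSubflow G (funOrbitClosure G f) :=
  ⟨⟨f, mem_funOrbitClosure_self f⟩, isClosed_closure,
    fun h _ hu => translate_comp_mem_funOrbitClosure hcont h hu⟩

theorem translate_comp_mem_envSemigroup (hcont : ∀ g : G, Continuous fun x : X => g • x)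
    {u : X → X} (h : G) (hu : u ∈ envSemigroup G X) :
    (fun x => h • x) ∘ u ∈ envSemigroup G X :=
  map_mem_closure (continuous_translate_comp hcont h) hu
    fun _ ⟨k, hk⟩ => ⟨h * k, hk ▸ translate_comp_translate h k id⟩

theorem comp_mem_funOrbitClosure (f : X → X) {e : X → X} (he : e ∈ envSemigroup G X) :
    e ∘ f ∈ funOrbitClosure G f :=
  map_mem_closure (f := fun u => u ∘ f) (continuous_pi fun x => continuous_apply (f x)) he
    fun _ ⟨g, hg⟩ => ⟨g, hg ▸ rfl⟩

theorem IsAlmostPeriodicFun.funOrbitClosure_eq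
    (hcont : ∀ g : G, Continuous fun x : X => g • x) {f u : X → X}
    (hf : IsAlmostPeriodicFun G f) (hu : u ∈ funOrbitClosure G f) :
    funOrbitClosure G u = funOrbitClosure G f :=
  hf.2 _ (funOrbitClosure_subset isClosed_closure
      (fun h _ hv => translate_comp_mem_funOrbitClosure hcont h hv) hu)
    (isFunSubflow_funOrbitClosure hcont u)

theorem IsAlmostPeriodicFun.of_mem_funOrbitClosure
    (hcont : ∀ g : G, Continuous fun x : X => g • x) {f u : X → X}
    (hf : IsAlmostPeriodicFun G f) (hu : u ∈ funOrbitClosure G f) :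
    IsAlmostPeriodicFun G u := by
  rw [IsAlmostPeriodicFun, hf.funOrbitClosure_eq hcont hu]
  exact hf

end FunctionFlow

theorem almostPeriodic_leftIdeal_general
    {G X : Type*} [Group G] [MulAction G X]
    [TopologicalSpace X]
    (hcont : ∀ g : G, Continuous fun x : X => g • x)
    (f : X → X) (hf : f ∈ envSemigroup G X) (hap : IsAlmostPeriodicFun G f)
    (e : X → X) (he : e ∈ envSemigroup G X) :
    e ∘ f ∈ envSemigroup G X ∧ IsAlmostPeriodicFun G (e ∘ f) := by
  have hef : e ∘ f ∈ funOrbitClosure G f := comp_mem_funOrbitClosure f he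
  exact ⟨funOrbitClosure_subset isClosed_closure
      (fun h _ hu => translate_comp_mem_envSemigroup hcont h hu) hf hef,
    hap.of_mem_funOrbitClosure hcont hef⟩

/-- The almost periodic elements of the enveloping semigroup form a left ideal. -/
theorem almostPeriodic_leftIdeal
    {G X : Type*} [Group G] [MulAction G X]
    [TopologicalSpace X] [CompactSpace X] [T2Space X] [Nonempty X]
    (hcont : ∀ g : G, Continuous fun x : X => g • x)
    (f : X → X) (hf : f ∈ envSemigroup G X) (hap : IsAlmostPeriodicFun G f)
    (e : X → X) (he : e ∈ envSemigroup G X) :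
    e ∘ f ∈ envSemigroup G X ∧ IsAlmostPeriodicFun G (e ∘ f) :=
  almostPeriodic_leftIdeal_general hcont f hf hap e he
end
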